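/- arXiv:1102.2618 — 4 statements merged into one kernel-verified Lean document; each statement's English description precedes it below -/
import Mathlib

section
/- A norm on c₀₀ which is permutation-invariant and multiplicative is unconditional: if x, y ∈ c₀₀ satisfy |x_i| = |y_i| for every i, then ‖x‖ = ‖y‖. -/
/-- Tensor product of finitely supported sequences, regarded as a finitely
supported sequence via a fixed bijection `e : ℕ ≃ ℕ × ℕ`. -/
noncomputable def tensor (e : ℕ ≃ ℕ × ℕ) (x y : ℕ →₀ ℝ) : ℕ →₀ ℝ :=
  Finsupp.onFinset ((x.support ×ˢ y.support).image e.symm)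
    (fun n => x (e n).1 * y (e n).2)
    (fun n h => by
      simp only [Finset.mem_image, Finset.mem_product]
      exact ⟨e n, ⟨Finsupp.mem_support_iff.2 (left_ne_zero_of_mul h),
        Finsupp.mem_support_iff.2 (right_ne_zero_of_mul h)⟩, e.symm_apply_apply n⟩)

/-- A permutation-invariant multiplicative norm on `c₀₀` is unconditional. -/
theorem unconditional_of_perm_invariant_multiplicative
    (e : ℕ ≃ ℕ × ℕ) (N : (ℕ →₀ ℝ) → ℝ)
    (hadd : ∀ x y, N (x + y) ≤ N x + N y)
    (hsmul : ∀ (c : ℝ) (x), N (c • x) = |c| * N x)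
    (hdef : ∀ x, N x = 0 ↔ x = 0)
    (hperm : ∀ (σ : Equiv.Perm ℕ) (x), N (Finsupp.equivMapDomain σ x) = N x)
    (hmul : ∀ x y, N (tensor e x y) = N x * N y) :
    ∀ x y : ℕ →₀ ℝ, (∀ i, |x i| = |y i|) → N x = N y := by
  intro x y hxy
  -- the vector b = e₀ - e₁
  set b : ℕ →₀ ℝ := Finsupp.single 0 1 - Finsupp.single 1 1 with hbdef
  have hb0 : b 0 = 1 := by simp [hbdef]
  have hb1 : b 1 = -1 := by simp [hbdef]
  have hbj : ∀ j : ℕ, j ≠ 0 → j ≠ 1 → b j = 0 := by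
    intro j h0 h1
    simp [hbdef, Finsupp.single_apply, h0.symm, h1.symm]
  have hbne : b ≠ 0 := by
    intro h
    rw [h] at hb0
    simpa using hb0
  have hNb : N b ≠ 0 := fun h => hbne ((hdef b).1 h)
  -- sign-flipping permutation
  set P : ℕ → Equiv.Perm ℕ := fun i => if x i = y i then Equiv.refl ℕ else Equiv.swap 0 1
    with hPdef
  have hPinv : ∀ i j, P i (P i j) = j := by
    intro i j
    by_cases h : x i = y i <;> simp [hPdef, h, Equiv.swap_apply_self]
  set τ : Equiv.Perm (ℕ × ℕ) := Equiv.prodCongrRight P with hτdef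
  have hτsymm : ∀ p, τ.symm p = τ p := by
    intro p
    have : τ (τ p) = p := by
      obtain ⟨i, j⟩ := p
      simp [hτdef, Equiv.prodCongrRight_apply, hPinv]
    conv_lhs => rw [← this]
    rw [Equiv.symm_apply_apply]
  set σ : Equiv.Perm ℕ := (e.trans (τ.trans e.symm) : ℕ ≃ ℕ) with hσdef
  have key : Finsupp.equivMapDomain σ (tensor e x b) = tensor e y b := by
    ext m
    rw [Finsupp.equivMapDomain_apply]
    show (tensor e x b) (σ.symm m) = (tensor e y b) m
    have h1 : e (σ.symm m) = τ (e m) := by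
      rw [← hτsymm]
      simp [hσdef]
    simp only [tensor, Finsupp.onFinset_apply]
    rw [h1]
    obtain ⟨i, j⟩ := e m
    simp only [hτdef, Equiv.prodCongrRight_apply]
    by_cases h : x i = y i
    · simp [hPdef, h]
    · have hyx : y i = -x i := by
        rcases abs_eq_abs.1 (hxy i) with h' | h'
        · exact absurd h' h
        · rw [h']; ring
      simp only [hPdef, h, if_false]
      rcases Nat.eq_zero_or_pos j with hj | hjpos
      · subst hj
        rw [Equiv.swap_apply_left, hb0, hb1, hyx]; ring
      · rcases eq_or_ne j 1 with hj1 | hj1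
        · subst hj1
          rw [Equiv.swap_apply_right, hb0, hb1, hyx]; ring
        · have hj0 : j ≠ 0 := Nat.pos_iff_ne_zero.1 hjpos
          rw [Equiv.swap_apply_of_ne_of_ne hj0 hj1, hbj j hj0 hj1]
          ring
  have h2 := hperm σ (tensor e x b)
  rw [key, hmul, hmul] at h2
  exact (mul_right_cancel₀ hNb h2).symm
end

section
/- A norm on c₀₀ which is permutation-invariant and multiplicative is monotone on nonnegative sequences: if a, b ∈ c₀₀ satisfy 0 ≤ a_i ≤ b_i for every i, then ‖a‖ ≤ ‖b‖. -/
lemma tensor_apply (e : ℕ ≃ ℕ × ℕ) (x y : ℕ →₀ ℝ) (n : ℕ) :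
    tensor e x y n = x (e n).1 * y (e n).2 := rfl

/-- The auxiliary vector `(1, -1, 0, 0, ...)`. -/
noncomputable def vv : ℕ →₀ ℝ := Finsupp.single 0 1 - Finsupp.single 1 1

lemma vv_zero : vv 0 = (1 : ℝ) := by simp [vv]

lemma vv_one : vv 1 = (-1 : ℝ) := by simp [vv]

lemma vv_other (m : ℕ) (h0 : m ≠ 0) (h1 : m ≠ 1) : vv m = 0 := by
  simp [vv, Finsupp.single_apply, Ne.symm h0, Ne.symm h1]

/-- Flipping the sign of a single coordinate does not change the norm. -/
lemma signflip (e : ℕ ≃ ℕ × ℕ) (N : (ℕ →₀ ℝ) → ℝ)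
    (hdef : ∀ x, N x = 0 ↔ x = 0)
    (hperm : ∀ (σ : Equiv.Perm ℕ) (x), N (Finsupp.equivMapDomain σ x) = N x)
    (hmul : ∀ x y, N (tensor e x y) = N x * N y)
    (b : ℕ →₀ ℝ) (j : ℕ) :
    N (b.update j (-(b j))) = N b := by
  classical
  set c := b.update j (-(b j)) with hc
  have hcj : c j = -(b j) := by
    rw [hc, Finsupp.coe_update, Function.update_self]
  have hcne : ∀ i, i ≠ j → c i = b i := by
    intro i hi
    rw [hc, Finsupp.coe_update, Function.update_of_ne hi]
  have hpts : e.symm (j, 0) ≠ e.symm (j, 1) := by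
    intro h
    have := e.symm.injective h
    simp at this
  set σ : Equiv.Perm ℕ := Equiv.swap (e.symm (j, 0)) (e.symm (j, 1)) with hσ
  have hkey : Finsupp.equivMapDomain σ (tensor e b vv) = tensor e c vv := by
    ext n
    rw [Finsupp.equivMapDomain_apply]
    have hσsymm : σ.symm = σ := Equiv.symm_swap _ _
    rw [hσsymm]
    by_cases h0 : n = e.symm (j, 0)
    · subst h0
      have : σ (e.symm (j, 0)) = e.symm (j, 1) := Equiv.swap_apply_left _ _
      rw [this, tensor_apply, tensor_apply]
      simp only [Equiv.apply_symm_apply]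
      rw [vv_one, vv_zero, hcj]; ring
    · by_cases h1 : n = e.symm (j, 1)
      · subst h1
        have : σ (e.symm (j, 1)) = e.symm (j, 0) := Equiv.swap_apply_right _ _
        rw [this, tensor_apply, tensor_apply]
        simp only [Equiv.apply_symm_apply]
        rw [vv_one, vv_zero, hcj]; ring
      · have : σ n = n := Equiv.swap_apply_of_ne_of_ne h0 h1
        rw [this, tensor_apply, tensor_apply]
        by_cases hj : (e n).1 = j
        · have hm0 : (e n).2 ≠ 0 := by
            intro hm
            apply h0
            have : e n = (j, 0) := Prod.ext hj hm
            rw [← this, Equiv.symm_apply_apply]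
          have hm1 : (e n).2 ≠ 1 := by
            intro hm
            apply h1
            have : e n = (j, 1) := Prod.ext hj hm
            rw [← this, Equiv.symm_apply_apply]
          rw [vv_other _ hm0 hm1, mul_zero, mul_zero]
        · rw [hcne _ hj]
  have hinv := hperm σ (tensor e b vv)
  rw [hkey, hmul, hmul] at hinv
  have hv : N vv ≠ 0 := by
    intro h
    have h0 := (hdef vv).mp h
    have : vv 0 = 0 := by rw [h0]; rfl
    rw [vv_zero] at this
    norm_num at this
  exact mul_right_cancel₀ hv hinv

/-- Decreasing a single nonnegative coordinate does not increase the norm. -/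
lemma update_le (e : ℕ ≃ ℕ × ℕ) (N : (ℕ →₀ ℝ) → ℝ)
    (hadd : ∀ x y, N (x + y) ≤ N x + N y)
    (hsmul : ∀ (c : ℝ) (x), N (c • x) = |c| * N x)
    (hdef : ∀ x, N x = 0 ↔ x = 0)
    (hperm : ∀ (σ : Equiv.Perm ℕ) (x), N (Finsupp.equivMapDomain σ x) = N x)
    (hmul : ∀ x y, N (tensor e x y) = N x * N y)
    (b : ℕ →₀ ℝ) (j : ℕ) (r : ℝ) (hr0 : 0 ≤ r) (hrb : r ≤ b j) :
    N (b.update j r) ≤ N b := by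
  classical
  by_cases hbj : b j = 0
  · have hr : r = 0 := le_antisymm (hrb.trans_eq hbj) hr0
    have : b.update j r = b := by
      ext i
      rw [Finsupp.coe_update, Function.update_apply]
      split_ifs with h
      · rw [h, hr, hbj]
      · rfl
    rw [this]
  · have hbj' : 0 < b j := lt_of_le_of_ne (hr0.trans hrb) (Ne.symm hbj)
    set t := r / b j with ht
    have ht0 : 0 ≤ t := div_nonneg hr0 hbj'.le
    have ht1 : t ≤ 1 := (div_le_one hbj').mpr hrb
    set c := b.update j (-(b j)) with hc
    have hdecomp : b.update j r = ((1 + t) / 2) • b + ((1 - t) / 2) • c := by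
      ext i
      rw [Finsupp.add_apply, Finsupp.smul_apply, Finsupp.smul_apply,
        smul_eq_mul, smul_eq_mul, Finsupp.coe_update, Function.update_apply]
      have hci : c i = if i = j then -(b j) else b i := by
        rw [hc, Finsupp.coe_update, Function.update_apply]
      rw [hci]
      split_ifs with h
      · have : t * b j = r := div_mul_cancel₀ r hbj
        subst h
        nlinarith [this]
      · ring
    have ha1 : (0 : ℝ) ≤ (1 + t) / 2 := by linarith
    have ha2 : (0 : ℝ) ≤ (1 - t) / 2 := by linarith
    have hNc : N c = N b := signflip e N hdef hperm hmul b j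
    calc N (b.update j r) = N (((1 + t) / 2) • b + ((1 - t) / 2) • c) := by
          rw [hdecomp]
      _ ≤ N (((1 + t) / 2) • b) + N (((1 - t) / 2) • c) := hadd _ _
      _ = (1 + t) / 2 * N b + (1 - t) / 2 * N c := by
          rw [hsmul, hsmul, abs_of_nonneg ha1, abs_of_nonneg ha2]
      _ = N b := by rw [hNc]; ring

/-- A permutation-invariant multiplicative norm on `c₀₀` is monotone on
nonnegative sequences. -/
theorem monotone_of_perm_invariant_multiplicative
    (e : ℕ ≃ ℕ × ℕ) (N : (ℕ →₀ ℝ) → ℝ)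
    (hadd : ∀ x y, N (x + y) ≤ N x + N y)
    (hsmul : ∀ (c : ℝ) (x), N (c • x) = |c| * N x)
    (hdef : ∀ x, N x = 0 ↔ x = 0)
    (hperm : ∀ (σ : Equiv.Perm ℕ) (x), N (Finsupp.equivMapDomain σ x) = N x)
    (hmul : ∀ x y, N (tensor e x y) = N x * N y) :
    ∀ a b : ℕ →₀ ℝ, (∀ i, 0 ≤ a i) → (∀ i, a i ≤ b i) → N a ≤ N b := by
  classical
  suffices H : ∀ s : Finset ℕ, ∀ a b : ℕ →₀ ℝ, (∀ i, 0 ≤ a i) → (∀ i, a i ≤ b i) →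
      (∀ i ∉ s, a i = b i) → N a ≤ N b by
    intro a b ha hab
    refine H (a.support ∪ b.support) a b ha hab (fun i hi => ?_)
    simp only [Finset.mem_union, Finsupp.mem_support_iff, not_or, not_not] at hi
    rw [hi.1, hi.2]
  intro s
  induction s using Finset.induction_on with
  | empty =>
      intro a b ha hab he
      have : a = b := Finsupp.ext fun i => he i (Finset.notMem_empty i)
      rw [this]
  | @insert j s' hj ih =>
      intro a b ha hab he
      set c := b.update j (a j) with hc
      have hcup : ∀ i, c i = if i = j then a j else b i := by
        intro i
        rw [hc, Finsupp.coe_update, Function.update_apply]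
      have h1 : N a ≤ N c := by
        refine ih a c ha (fun i => ?_) (fun i hi => ?_)
        · rw [hcup]
          split_ifs with h
          · rw [h]
          · exact hab i
        · rw [hcup]
          split_ifs with h
          · rw [h]
          · exact he i (by simp [Finset.mem_insert, h, hi])
      have h2 : N c ≤ N b :=
        update_le e N hadd hsmul hdef hperm hmul b j (a j) (ha j) (hab j)
      exact h1.trans h2
end

section
/- Let (u_n)_{n≥1} be a nonzero, non-decreasing sequence of real numbers satisfying u_{kn} = u_k · u_n for all k, n ≥ 1. Then there exists α ≥ 0 such that u_n = n^α for all n ≥ 1. -/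
/-!
Take logarithms: `f n = log u n` is monotone and satisfies `f (n ^ k) = k * f n`, and so does
`log n`. Bracketing `m ^ k` between consecutive powers of `n` bounds both `k * f m` and
`k * log m` between `j * f n` and `(j + 1) * f n` (resp. with `log n`), so
`k * (f m * log n - f n * log m)` stays bounded as `k → ∞`. Hence `f m / log m` is constant.
-/

open Real Set

lemma eq_zero_of_forall_abs_nat_mul_le {x C : ℝ} (h : ∀ k : ℕ, |k * x| ≤ C) : x = 0 := by
  by_contra hx
  have hx' : 0 < |x| := abs_pos.mpr hx
  obtain ⟨k, hk⟩ := exists_nat_gt (C / |x|)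
  have hkx := h k
  rw [abs_mul, Nat.abs_cast] at hkx
  rw [div_lt_iff₀ hx'] at hk
  linarith

section PowHomogeneous

variable {f : ℕ → ℝ} (hmono : MonotoneOn f (Ici 1))
  (hpow : ∀ n k : ℕ, 1 ≤ n → f (n ^ k) = k * f n)
include hmono hpow

lemma natLog_mul_le_apply {b m : ℕ} (hb : 1 ≤ b) (hm : 1 ≤ m) :
    (Nat.log b m : ℝ) * f b ≤ f m := by
  rw [← hpow b _ hb]
  exact hmono (Nat.one_le_pow _ _ hb) hm (Nat.pow_log_le_self b (by omega))

lemma apply_le_natLog_succ_mul {b m : ℕ} (hb : 1 < b) (hm : 1 ≤ m) :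
    f m ≤ (Nat.log b m + 1 : ℝ) * f b := by
  rw [← Nat.cast_succ, ← hpow b _ hb.le]
  exact hmono hm (Nat.one_le_pow _ _ (by omega)) (Nat.lt_pow_succ_log_self hb m).le

lemma apply_nonneg_of_pow {n : ℕ} (hn : 1 ≤ n) : 0 ≤ f n := by
  have hf1 : f 1 = 0 := by simpa using hpow 1 0 le_rfl
  exact hf1 ▸ hmono (le_refl 1) hn hn

end PowHomogeneous

lemma apply_mul_apply_eq_of_pow {f g : ℕ → ℝ}
    (hf : MonotoneOn f (Ici 1)) (hfpow : ∀ n k : ℕ, 1 ≤ n → f (n ^ k) = k * f n)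
    (hg : MonotoneOn g (Ici 1)) (hgpow : ∀ n k : ℕ, 1 ≤ n → g (n ^ k) = k * g n)
    {m n : ℕ} (hm : 1 ≤ m) (hn : 2 ≤ n) :
    f m * g n = f n * g m := by
  have hfn := apply_nonneg_of_pow hf hfpow (n := n) (by omega)
  have hgn := apply_nonneg_of_pow hg hgpow (n := n) (by omega)
  suffices h : ∀ k : ℕ, |k * (f m * g n - f n * g m)| ≤ f n * g n by
    linarith [eq_zero_of_forall_abs_nat_mul_le h]
  intro k
  have hmk : 1 ≤ m ^ k := Nat.one_le_pow _ _ hm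
  have hf₁ := natLog_mul_le_apply hf hfpow (b := n) (by omega) hmk
  have hf₂ := apply_le_natLog_succ_mul hf hfpow hn hmk
  have hg₁ := natLog_mul_le_apply hg hgpow (b := n) (by omega) hmk
  have hg₂ := apply_le_natLog_succ_mul hg hgpow hn hmk
  rw [hfpow m k hm] at hf₁ hf₂
  rw [hgpow m k hm] at hg₁ hg₂
  rw [abs_le]
  constructor
  · nlinarith [mul_le_mul_of_nonneg_right hf₁ hgn, mul_le_mul_of_nonneg_right hg₂ hfn]
  · nlinarith [mul_le_mul_of_nonneg_right hf₂ hgn, mul_le_mul_of_nonneg_right hg₁ hfn]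

lemma monotoneOn_log_natCast : MonotoneOn (fun n : ℕ => log n) (Ici 1) :=
  fun _ ha _ _ hab => log_le_log (by exact_mod_cast ha) (by exact_mod_cast hab)

lemma apply_pow_of_map_mul {u : ℕ → ℝ} (h1 : u 1 = 1)
    (hmul : ∀ k n, 1 ≤ k → 1 ≤ n → u (k * n) = u k * u n) {n : ℕ} (hn : 1 ≤ n) (k : ℕ) :
    u (n ^ k) = u n ^ k := by
  induction k with
  | zero => simpa using h1
  | succ k ih => rw [pow_succ, pow_succ, hmul _ _ (Nat.one_le_pow _ _ hn) hn, ih]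

lemma apply_one_eq_one_of_map_mul {u : ℕ → ℝ} (hne : ∃ n, 1 ≤ n ∧ u n ≠ 0)
    (hmul : ∀ k n, 1 ≤ k → 1 ≤ n → u (k * n) = u k * u n) : u 1 = 1 := by
  obtain ⟨n, hn, hun⟩ := hne
  have hu1 : u 1 ≠ 0 := fun h => hun (by simpa [h] using hmul n 1 hn le_rfl)
  have h11 : u 1 * u 1 = u 1 * 1 := by simpa using (hmul 1 1 le_rfl le_rfl).symm
  exact mul_left_cancel₀ hu1 h11

/-- A nonzero, non-decreasing multiplicative sequence `(u_n)_{n ≥ 1}` equals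
`(n^α)_{n ≥ 1}` for some `α ≥ 0`. -/
theorem multiplicative_monotone_sequence_eq_rpow (u : ℕ → ℝ)
    (hne : ∃ n, 1 ≤ n ∧ u n ≠ 0)
    (hmono : ∀ m n, 1 ≤ m → m ≤ n → u m ≤ u n)
    (hmul : ∀ k n, 1 ≤ k → 1 ≤ n → u (k * n) = u k * u n) :
    ∃ α : ℝ, 0 ≤ α ∧ ∀ n, 1 ≤ n → u n = (n : ℝ) ^ α := by
  have h1 := apply_one_eq_one_of_map_mul hne hmul
  have hpos : ∀ n, 1 ≤ n → 0 < u n := fun n hn => by linarith [hmono 1 n le_rfl hn]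
  have hf : MonotoneOn (fun n => log (u n)) (Ici 1) := fun m hm n _ hmn =>
    log_le_log (hpos m hm) (hmono m n hm hmn)
  have hfpow : ∀ n k : ℕ, 1 ≤ n → log (u (n ^ k)) = k * log (u n) := fun n k hn => by
    rw [apply_pow_of_map_mul h1 hmul hn, log_pow]
  have hgpow : ∀ n k : ℕ, 1 ≤ n → log ((n ^ k : ℕ) : ℝ) = k * log n := fun n k _ => by
    rw [Nat.cast_pow, log_pow]
  have hlog2 : 0 < log 2 := log_pos one_lt_two
  refine ⟨log (u 2) / log 2,
    div_nonneg (apply_nonneg_of_pow hf hfpow one_le_two) hlog2.le, fun n hn => ?_⟩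
  have key := apply_mul_apply_eq_of_pow hf hfpow monotoneOn_log_natCast hgpow hn le_rfl
  rw [rpow_def_of_pos (by exact_mod_cast hn), ← exp_log (hpos n hn)]
  congr 1
  push_cast at key
  field_simp
  linarith
end

section
/- Let ‖·‖ be a norm on c₀₀ that is permutation-invariant and multiplicative, let p ∈ [1,+∞), and suppose ‖1ⁿ‖ = n^{1/p} for every n ≥ 1. Then for every x ∈ c₀₀ one has ‖x‖ ≤ ‖x‖_p. -/
/-- The sequence `1ⁿ` consisting of `n` ones followed by zeros. -/
noncomputable def oneVec (n : ℕ) : ℕ →₀ ℝ :=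
  Finsupp.indicator (Finset.range n) (fun _ _ => 1)

open Finset Pointwise

theorem Finset.pow_subset_image_prod_pow {α : Type*} [CommMonoid α] [DecidableEq α]
    (s : Finset α) (k : ℕ) :
    s ^ k ⊆ (Fintype.piFinset fun _ : s => range (k + 1)).image
      fun m => ∏ d : s, (d : α) ^ m d := by
  induction k with
  | zero =>
    rw [pow_zero, one_subset]
    exact mem_image.2 ⟨fun _ => 0, by simp, by simp⟩
  | succ k ih =>
    intro w hw
    obtain ⟨u, hu, v, hv, rfl⟩ := mem_mul.1 (pow_succ s k ▸ hw)
    obtain ⟨m, hm, rfl⟩ := mem_image.1 (ih hu)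
    refine mem_image.2 ⟨m + Pi.single ⟨v, hv⟩ 1, ?_, ?_⟩
    · simp only [Fintype.mem_piFinset, mem_range] at hm ⊢
      intro d
      have := hm d
      rcases eq_or_ne d ⟨v, hv⟩ with rfl | h <;> simp [*] <;> omega
    · simp only [Pi.add_apply, pow_add, prod_mul_distrib]
      congr 1
      rw [Fintype.prod_eq_single ⟨v, hv⟩ fun d hd => by simp [Pi.single_eq_of_ne hd]]
      simp

theorem Finset.card_pow_le_succ_pow_card {α : Type*} [CommMonoid α] [DecidableEq α]
    (s : Finset α) (k : ℕ) : #(s ^ k) ≤ (k + 1) ^ #s := by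
  calc #(s ^ k) ≤ #(Fintype.piFinset fun _ : s => range (k + 1)) :=
        (card_le_card (s.pow_subset_image_prod_pow k)).trans card_image_le
    _ = (k + 1) ^ #s := by simp

theorem le_of_forall_pow_le_succ_pow_mul_pow {a b : ℝ} (hb : 0 ≤ b) (d : ℕ)
    (h : ∀ k : ℕ, a ^ k ≤ (k + 1) ^ d * b ^ k) : a ≤ b := by
  by_contra! hba
  have ha : 0 < a := hb.trans_lt hba
  set r := b / a
  have hr0 : 0 ≤ r := div_nonneg hb ha.le
  have hlim := (tendsto_pow_const_mul_const_pow_of_lt_one d hr0 ((div_lt_one ha).2 hba)).const_mul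
    (2 ^ d : ℝ)
  rw [mul_zero] at hlim
  obtain ⟨k, hk, hk1⟩ :=
    ((hlim.eventually (gt_mem_nhds one_pos)).and (Filter.eventually_ge_atTop 1)).exists
  have hsucc : ((k : ℝ) + 1) ^ d ≤ 2 ^ d * (k : ℝ) ^ d := by
    rw [← mul_pow]
    gcongr
    have : (1 : ℝ) ≤ k := by exact_mod_cast hk1
    linarith
  have hsmall : ((k : ℝ) + 1) ^ d * r ^ k < 1 := by
    calc ((k : ℝ) + 1) ^ d * r ^ k ≤ 2 ^ d * (k : ℝ) ^ d * r ^ k := by gcongr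
      _ < 1 := by simpa [mul_assoc] using hk
  have hbk : b ^ k = r ^ k * a ^ k := by
    rw [div_pow, div_mul_cancel₀ _ (pow_ne_zero _ ha.ne')]
  have := h k
  rw [hbk] at this
  nlinarith [pow_pos ha k]

noncomputable def oneOn {ι : Type*} (S : Finset ι) : ι →₀ ℝ :=
  Finsupp.indicator S fun _ _ => 1

theorem oneOn_apply {ι : Type*} [DecidableEq ι] (S : Finset ι) (i : ι) :
    oneOn S i = if i ∈ S then 1 else 0 := by
  simp [oneOn, Finsupp.indicator_apply]

theorem exists_perm_equivMapDomain_oneVec (S : Finset ℕ) :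
    ∃ σ : Equiv.Perm ℕ, Finsupp.equivMapDomain σ (oneVec #S) = oneOn S := by
  let e : {i // i ∈ range #S} ≃ {i // i ∈ S} := equivOfCardEq (card_range _)
  refine ⟨e.extendSubtype, Finsupp.ext fun i => ?_⟩
  have hmem : ∀ j, e.extendSubtype j ∈ S ↔ j ∈ range #S := fun j =>
    ⟨fun h => by_contra fun hj => e.extendSubtype_not_mem j hj h, e.extendSubtype_mem j⟩
  have := hmem (e.extendSubtype.symm i)
  rw [Equiv.apply_symm_apply] at this
  simp only [Finsupp.equivMapDomain_apply, oneVec, oneOn_apply, this]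
  simp [Finsupp.indicator_apply]

theorem Finsupp.sum_frange_smul_oneOn {ι : Type*} [DecidableEq ι] (y : ι →₀ ℝ) :
    ∑ v ∈ y.frange, v • oneOn {i ∈ y.support | y i = v} = y := by
  ext i
  simp only [finsetSum_apply, smul_apply, oneOn_apply, mem_filter, smul_eq_mul, mul_ite, mul_one,
    mul_zero]
  by_cases hi : i ∈ y.support
  · rw [sum_eq_single_of_mem (y i) (mem_frange_of_mem hi)
      fun v _ hv => if_neg fun h => hv h.2.symm]
    simp [hi]
  · rw [notMem_support_iff.1 hi]
    exact sum_eq_zero fun v _ => if_neg fun h => hi h.1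

noncomputable def Finsupp.lpNorm {ι : Type*} (p : ℝ) (x : ι →₀ ℝ) : ℝ :=
  (∑ i ∈ x.support, |x i| ^ p) ^ (1 / p)

theorem Finsupp.lpNorm_nonneg {ι : Type*} (p : ℝ) (x : ι →₀ ℝ) : 0 ≤ x.lpNorm p := by
  unfold lpNorm
  positivity

theorem abs_mul_card_rpow_le_lpNorm {ι : Type*} {p : ℝ} (hp : 0 < p) {y : ι →₀ ℝ}
    {S : Finset ι} {v : ℝ} (hS : S ⊆ y.support) (hv : ∀ i ∈ S, y i = v) :
    |v| * (#S : ℝ) ^ (1 / p) ≤ y.lpNorm p := by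
  calc |v| * (#S : ℝ) ^ (1 / p) = (∑ i ∈ S, |y i| ^ p) ^ (1 / p) := by
        rw [sum_congr rfl fun i hi => by rw [hv i hi], sum_const, nsmul_eq_mul,
          Real.mul_rpow (Nat.cast_nonneg _) (by positivity), one_div,
          Real.rpow_rpow_inv (abs_nonneg v) hp.ne', mul_comm]
    _ ≤ y.lpNorm p := by
      unfold Finsupp.lpNorm
      gcongr

theorem Seminorm.le_card_frange_mul_lpNorm {ι : Type*} [DecidableEq ι]
    (q : Seminorm ℝ (ι →₀ ℝ)) {p : ℝ} (hp : 0 < p)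
    (hq : ∀ S : Finset ι, S.Nonempty → q (oneOn S) = (#S : ℝ) ^ (1 / p)) (y : ι →₀ ℝ) :
    q y ≤ #y.frange * y.lpNorm p := by
  have hlevel : ∀ v ∈ y.frange, q (v • oneOn {i ∈ y.support | y i = v}) ≤ y.lpNorm p := by
    intro v hv
    obtain ⟨hv0, i, rfl⟩ := Finsupp.mem_frange.1 hv
    have hne : ({j ∈ y.support | y j = y i} : Finset ι).Nonempty :=
      ⟨i, mem_filter.2 ⟨Finsupp.mem_support_iff.2 hv0, rfl⟩⟩
    rw [map_smul_eq_mul, Real.norm_eq_abs, hq _ hne]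
    exact abs_mul_card_rpow_le_lpNorm hp (filter_subset _ _) fun j hj => (mem_filter.1 hj).2
  calc q y = q (∑ v ∈ y.frange, v • oneOn {i ∈ y.support | y i = v}) := by
        rw [y.sum_frange_smul_oneOn]
    _ ≤ ∑ v ∈ y.frange, q (v • oneOn {i ∈ y.support | y i = v}) :=
        le_sum_of_subadditive q (map_zero q).le (map_add_le_add q) _ _
    _ ≤ #y.frange * y.lpNorm p := by
        simpa using sum_le_sum hlevel

theorem frange_tensor_subset (e : ℕ ≃ ℕ × ℕ) (x y : ℕ →₀ ℝ) :
    (tensor e x y).frange ⊆ x.frange * y.frange := by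
  intro v hv
  obtain ⟨hv0, n, rfl⟩ := Finsupp.mem_frange.1 hv
  exact mem_mul.2 ⟨_, Finsupp.mem_frange.2 ⟨left_ne_zero_of_mul hv0, _, rfl⟩,
    _, Finsupp.mem_frange.2 ⟨right_ne_zero_of_mul hv0, _, rfl⟩, rfl⟩

theorem sum_support_tensor_abs_rpow (e : ℕ ≃ ℕ × ℕ) {p : ℝ} (hp : p ≠ 0) (x y : ℕ →₀ ℝ) :
    ∑ n ∈ (tensor e x y).support, |tensor e x y n| ^ p =
      (∑ i ∈ x.support, |x i| ^ p) * ∑ j ∈ y.support, |y j| ^ p := by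
  have hsub : (tensor e x y).support ⊆ (x.support ×ˢ y.support).image e.symm :=
    Finsupp.support_onFinset_subset
  rw [sum_subset hsub fun n _ hn => by
      rw [Finsupp.notMem_support_iff.1 hn, abs_zero, Real.zero_rpow hp],
    sum_image fun _ _ _ _ h => e.symm.injective h, sum_mul_sum, ← sum_product']
  refine sum_congr rfl fun ij _ => ?_
  simp only [tensor, Finsupp.onFinset_apply, Equiv.apply_symm_apply, abs_mul]
  exact Real.mul_rpow (abs_nonneg _) (abs_nonneg _)

theorem lpNorm_tensor (e : ℕ ≃ ℕ × ℕ) {p : ℝ} (hp : p ≠ 0) (x y : ℕ →₀ ℝ) :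
    (tensor e x y).lpNorm p = x.lpNorm p * y.lpNorm p := by
  have hnonneg (z : ℕ →₀ ℝ) : 0 ≤ ∑ i ∈ z.support, |z i| ^ p :=
    sum_nonneg fun i _ => by positivity
  unfold Finsupp.lpNorm
  rw [sum_support_tensor_abs_rpow e hp, Real.mul_rpow (hnonneg x) (hnonneg y)]

noncomputable def tensorPow (e : ℕ ≃ ℕ × ℕ) (x : ℕ →₀ ℝ) : ℕ → ℕ →₀ ℝ
  | 0 => oneVec 1
  | k + 1 => tensor e x (tensorPow e x k)

theorem oneVec_one : oneVec 1 = Finsupp.single 0 1 := by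
  ext i
  simp [oneVec, Finsupp.indicator_apply, Finsupp.single_apply, eq_comm]

theorem frange_tensorPow_subset (e : ℕ ≃ ℕ × ℕ) (x : ℕ →₀ ℝ) (k : ℕ) :
    (tensorPow e x k).frange ⊆ x.frange ^ k := by
  induction k with
  | zero =>
    rw [tensorPow, oneVec_one, pow_zero]
    exact Finsupp.frange_single
  | succ k ih =>
    exact (frange_tensor_subset e x _).trans (pow_succ' x.frange k ▸ mul_subset_mul_left ih)

theorem lpNorm_tensorPow (e : ℕ ≃ ℕ × ℕ) {p : ℝ} (hp : p ≠ 0) (x : ℕ →₀ ℝ) (k : ℕ) :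
    (tensorPow e x k).lpNorm p = x.lpNorm p ^ k := by
  induction k with
  | zero => simp [tensorPow, oneVec_one, Finsupp.lpNorm]
  | succ k ih => rw [tensorPow, lpNorm_tensor e hp, ih, pow_succ']

theorem map_tensorPow {e : ℕ ≃ ℕ × ℕ} {N : (ℕ →₀ ℝ) → ℝ}
    (hmul : ∀ x y, N (tensor e x y) = N x * N y) (h1 : N (oneVec 1) = 1) (x : ℕ →₀ ℝ) (k : ℕ) :
    N (tensorPow e x k) = N x ^ k := by
  induction k with
  | zero => exact h1
  | succ k ih => rw [tensorPow, hmul, ih, pow_succ']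

theorem lp_upper_bound_general
    (e : ℕ ≃ ℕ × ℕ) (N : (ℕ →₀ ℝ) → ℝ)
    (hadd : ∀ x y, N (x + y) ≤ N x + N y)
    (hsmul : ∀ (c : ℝ) (x), N (c • x) = |c| * N x)
    (hperm : ∀ (σ : Equiv.Perm ℕ) (x), N (Finsupp.equivMapDomain σ x) = N x)
    (hmul : ∀ x y, N (tensor e x y) = N x * N y)
    (p : ℝ) (hp : 1 ≤ p)
    (hone : ∀ n : ℕ, 1 ≤ n → N (oneVec n) = (n : ℝ) ^ (1 / p)) :
    ∀ x : ℕ →₀ ℝ, N x ≤ (∑ i ∈ x.support, |x i| ^ p) ^ (1 / p) := by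
  intro x
  have hp0 : 0 < p := by linarith
  let q : Seminorm ℝ (ℕ →₀ ℝ) := .of N hadd fun c y => by rw [hsmul, Real.norm_eq_abs]
  have hq : ∀ S : Finset ℕ, S.Nonempty → q (oneOn S) = (#S : ℝ) ^ (1 / p) := fun S hS => by
    obtain ⟨σ, hσ⟩ := exists_perm_equivMapDomain_oneVec S
    rw [← hσ]
    exact (hperm σ _).trans (hone _ (card_pos.2 hS))
  have hN1 : N (oneVec 1) = 1 := by simpa using hone 1 le_rfl
  refine le_of_forall_pow_le_succ_pow_mul_pow (x.lpNorm_nonneg p) #x.frange fun k => ?_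
  have hcard : #(tensorPow e x k).frange ≤ (k + 1) ^ #x.frange :=
    (card_le_card (frange_tensorPow_subset e x k)).trans (x.frange.card_pow_le_succ_pow_card k)
  calc N x ^ k = q (tensorPow e x k) := (map_tensorPow hmul hN1 x k).symm
    _ ≤ #(tensorPow e x k).frange * (tensorPow e x k).lpNorm p :=
        q.le_card_frange_mul_lpNorm hp0 hq _
    _ ≤ (k + 1) ^ #x.frange * x.lpNorm p ^ k := by
        rw [lpNorm_tensorPow e hp0.ne']
        gcongr
        · exact pow_nonneg (x.lpNorm_nonneg p) k
        · exact_mod_cast hcard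

/-- Upper bound: if `‖1ⁿ‖ = n^(1/p)` for every `n ≥ 1`, then `‖x‖ ≤ ‖x‖_p`. -/
theorem lp_upper_bound
    (e : ℕ ≃ ℕ × ℕ) (N : (ℕ →₀ ℝ) → ℝ)
    (hadd : ∀ x y, N (x + y) ≤ N x + N y)
    (hsmul : ∀ (c : ℝ) (x), N (c • x) = |c| * N x)
    (hdef : ∀ x, N x = 0 ↔ x = 0)
    (hperm : ∀ (σ : Equiv.Perm ℕ) (x), N (Finsupp.equivMapDomain σ x) = N x)
    (hmul : ∀ x y, N (tensor e x y) = N x * N y)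
    (p : ℝ) (hp : 1 ≤ p)
    (hone : ∀ n : ℕ, 1 ≤ n → N (oneVec n) = (n : ℝ) ^ (1 / p)) :
    ∀ x : ℕ →₀ ℝ, N x ≤ (∑ i ∈ x.support, |x i| ^ p) ^ (1 / p) :=
  lp_upper_bound_general e N hadd hsmul hperm hmul p hp hone
end
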